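/- arXiv:1403.6290 — 2 statements merged into one kernel-verified Lean document; each statement's English description precedes it below -/
import Mathlib

section
/- Let A ∈ ℝ^{p×n} with A·1 = 0 and SVD A = UΣV, and set β = −min_{ij}(A^T A)_{ij} ≥ 0. Then the augmented data Ã = [√β·1^T; A] has SVD Ã = Ũ Σ̃ Ṽ with Ũ = blkdiag(1, U), Σ̃ = blkdiag(√(βn), Σ), and Ṽ = [(1/√n)·1^T; V]. -/
open Matrix Finset

/-- For mean-removed `A` with compact SVD `A = U Σ V` and
`β = −min_{ij}(Aᵀ A)_{ij}`, the augmented data `Ã = [√β·1ᵀ; A]` has SVD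
`Ã = Ũ Σ̃ Ṽ` with `Ũ = blkdiag(1, U)`, `Σ̃ = blkdiag(√(βn), Σ)`, and
`Ṽ = [(1/√n)·1ᵀ; V]`. -/
theorem augmented_data_svd
    (p n m : ℕ) (hn : 0 < n)
    (A : Matrix (Fin p) (Fin n) ℝ)
    (hmean : A *ᵥ (fun _ => (1 : ℝ)) = 0)
    (U : Matrix (Fin p) (Fin m) ℝ) (σ : Fin m → ℝ)
    (V : Matrix (Fin m) (Fin n) ℝ)
    (hA : A = U * Matrix.diagonal σ * V)
    (hU : Uᵀ * U = 1) (hV : V * Vᵀ = 1)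
    (hσpos : ∀ i, 0 < σ i) (hσdesc : ∀ i j : Fin m, i ≤ j → σ j ≤ σ i)
    (β : ℝ)
    (hβ1 : ∀ i j, -β ≤ (Aᵀ * A) i j)
    (hβ2 : ∃ i j, (Aᵀ * A) i j = -β)
    (Atil : Matrix (Fin (p + 1)) (Fin n) ℝ)
    (hAtil : Atil = Matrix.of (fun i j =>
      Fin.cases (Real.sqrt β) (fun i' => A i' j) i))
    (Util : Matrix (Fin (p + 1)) (Fin (m + 1)) ℝ)
    (hUtil : Util = Matrix.of (fun i j =>
      Fin.cases (Fin.cases (1 : ℝ) (fun _ => 0) j)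
        (fun i' => Fin.cases (0 : ℝ) (fun j' => U i' j') j) i))
    (Stil : Matrix (Fin (m + 1)) (Fin (m + 1)) ℝ)
    (hStil : Stil = Matrix.diagonal
      (fun i => Fin.cases (Real.sqrt (β * n)) σ i))
    (Vtil : Matrix (Fin (m + 1)) (Fin n) ℝ)
    (hVtil : Vtil = Matrix.of (fun i j =>
      Fin.cases ((1 : ℝ) / Real.sqrt n) (fun i' => V i' j) i)) :
    Atil = Util * Stil * Vtil ∧ Utilᵀ * Util = 1 ∧ Vtil * Vtilᵀ = 1 := by

  have hnℝ : (0:ℝ) < (n:ℝ) := by exact_mod_cast hn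
  have hsn : Real.sqrt n ≠ 0 := (Real.sqrt_pos.mpr hnℝ).ne'
  have hrowA : ∀ k : Fin p, ∑ j, A k j = 0 := by
    intro k
    have h := congrFun hmean k
    simpa [Matrix.mulVec, dotProduct] using h
  have hβ0 : 0 ≤ β := by
    have h0 : ∑ j : Fin n, (Aᵀ * A) ⟨0, hn⟩ j = 0 := by
      simp only [Matrix.mul_apply, Matrix.transpose_apply]
      rw [Finset.sum_comm]
      simp [← Finset.mul_sum, hrowA]
    have h2 : ∑ _j : Fin n, (-β) ≤ ∑ j : Fin n, (Aᵀ * A) ⟨0, hn⟩ j :=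
      Finset.sum_le_sum (fun j _ => hβ1 _ j)
    rw [h0, Finset.sum_const, Finset.card_univ, Fintype.card_fin, nsmul_eq_mul] at h2
    nlinarith
  have hVsum : ∀ i : Fin m, ∑ j, V i j = 0 := by
    intro i
    have h1 : (Matrix.diagonal σ * V) *ᵥ (fun _ => (1:ℝ)) = 0 := by
      have : Uᵀ *ᵥ (A *ᵥ (fun _ => (1:ℝ))) = (Matrix.diagonal σ * V) *ᵥ (fun _ => (1:ℝ)) := by
        rw [hA, ← Matrix.mulVec_mulVec, ← Matrix.mulVec_mulVec, Matrix.mulVec_mulVec,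
          hU, Matrix.one_mulVec, Matrix.mulVec_mulVec]
      rw [hmean, Matrix.mulVec_zero] at this
      exact this.symm
    have h2 := congrFun h1 i
    have h3 : σ i * ∑ j, V i j = 0 := by
      simpa [Matrix.mulVec, dotProduct, Matrix.mul_apply, Matrix.diagonal,
        Finset.mul_sum] using h2
    exact (mul_eq_zero.mp h3).resolve_left (hσpos i).ne'
  have hzs : ∀ k' : Fin m, ((0 : Fin (m+1)) = k'.succ) = False := by
    intro k'; simp [eq_comm, Fin.succ_ne_zero]
  refine ⟨?_, ?_, ?_⟩
  · ext i j
    refine Fin.cases ?_ (fun i' => ?_) i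
    · simp only [hAtil, hUtil, hStil, hVtil, Matrix.mul_apply, Matrix.of_apply,
        Fin.sum_univ_succ, Fin.cases_zero, Fin.cases_succ, Matrix.diagonal_apply,
        if_pos rfl]
      rw [Real.sqrt_mul hβ0]
      simp [Matrix.diagonal, Fin.succ_ne_zero, hzs]
      field_simp
    · simp only [hAtil, hUtil, hStil, hVtil, Matrix.mul_apply, Matrix.of_apply,
        Fin.sum_univ_succ, Fin.cases_zero, Fin.cases_succ]
      rw [hA]
      simp [Matrix.mul_apply, Matrix.diagonal, Fin.sum_univ_succ, Fin.succ_ne_zero,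
        Finset.sum_mul, mul_assoc]
  · ext j k
    refine Fin.cases ?_ (fun j' => ?_) j <;> refine Fin.cases ?_ (fun k' => ?_) k
    · simp [hUtil, Matrix.mul_apply, Fin.sum_univ_succ]
    · simp [hUtil, Matrix.mul_apply, Fin.sum_univ_succ, Matrix.one_apply, Fin.succ_ne_zero, hzs]
    · simp [hUtil, Matrix.mul_apply, Fin.sum_univ_succ, Matrix.one_apply, (Fin.succ_ne_zero _).symm, Fin.succ_ne_zero, hzs]
    · have := congrFun (congrFun hU j') k'
      simp only [Matrix.mul_apply, Matrix.transpose_apply] at this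
      simp [hUtil, Matrix.mul_apply, Fin.sum_univ_succ, this, Matrix.one_apply,
        Fin.succ_inj, hzs]
  · ext j k
    refine Fin.cases ?_ (fun j' => ?_) j <;> refine Fin.cases ?_ (fun k' => ?_) k
    · simp only [hVtil, Matrix.mul_apply, Matrix.transpose_apply, Matrix.of_apply,
        Fin.cases_zero]
      rw [Finset.sum_const, Finset.card_univ, Fintype.card_fin, nsmul_eq_mul]
      rw [div_mul_div_comm, one_mul, Real.mul_self_sqrt hnℝ.le]
      simp [Matrix.one_apply]
      field_simp
    · simp only [hVtil, Matrix.mul_apply, Matrix.transpose_apply, Matrix.of_apply,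
        Fin.cases_zero, Fin.cases_succ]
      simp [← Finset.mul_sum, hVsum, Matrix.one_apply, Fin.succ_ne_zero, hzs]
    · simp only [hVtil, Matrix.mul_apply, Matrix.transpose_apply, Matrix.of_apply,
        Fin.cases_zero, Fin.cases_succ]
      simp [← Finset.sum_mul, hVsum, Matrix.one_apply, Fin.succ_ne_zero,
        (Fin.succ_ne_zero _).symm, hzs]
    · have := congrFun (congrFun hV j') k'
      simp only [Matrix.mul_apply, Matrix.transpose_apply] at this
      simp [hVtil, Matrix.mul_apply, this, Matrix.one_apply, Fin.succ_inj,
        Fin.succ_ne_zero, hzs]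
end

section
/- With A·1 = 0, β = −min_{ij}(A^T A)_{ij}, W = Ã^T Ã where Ã = [√β·1^T; A], the matrix W is entrywise nonnegative, its degree matrix is diag(W·1) = βn·I, and the Laplacian L = βn·I − Ã^T Ã is positive semidefinite; consequently βn ≥ σ_1², where σ_1 is the largest singular value of A. -/
open Matrix Finset

/-! Since `A 1 = 0`, every row of `Aᵀ A` sums to zero, so its least entry `-β` is nonpositive and
`W = β 11ᵀ + Aᵀ A` is a symmetric nonnegative matrix whose rows all sum to `β n`. Then `β n I - W`
is the Laplacian of the weighted graph `W`, with quadratic form `½ ∑ᵢⱼ Wᵢⱼ (xᵢ - xⱼ)²`. For the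
leading right singular vector `x`, `σ₁² = ‖A x‖² ≤ ‖Ã x‖² = xᵀ W x ≤ β n ‖x‖² = β n`. -/

namespace Matrix

variable {R ι κ ν : Type*} [Fintype ι]

/-- The paper's `Ã = [√β 1ᵀ; A]` is `consConstRow √β A`. -/
def consConstRow {p : ℕ} (c : R) (A : Matrix (Fin p) ι R) : Matrix (Fin (p + 1)) ι R :=
  of fun i j => Fin.cases c (fun i' => A i' j) i

section CommSemiring

variable [CommSemiring R]

omit [Fintype ι] in
theorem consConstRow_transpose_mul_self_apply {p : ℕ} (c : R) (A : Matrix (Fin p) ι R)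
    (i j : ι) : ((consConstRow c A)ᵀ * consConstRow c A) i j = c * c + (Aᵀ * A) i j := by
  simp [consConstRow, mul_apply, Fin.sum_univ_succ]

theorem consConstRow_mulVec_dotProduct_self {p : ℕ} (c : R) (A : Matrix (Fin p) ι R)
    (x : ι → R) :
    (consConstRow c A *ᵥ x) ⬝ᵥ (consConstRow c A *ᵥ x) =
      (c * ∑ j, x j) * (c * ∑ j, x j) + (A *ᵥ x) ⬝ᵥ (A *ᵥ x) := by
  simp [consConstRow, dotProduct, mulVec, Fin.sum_univ_succ, mul_sum]

theorem sum_transpose_mul_self_apply_eq_zero [Fintype κ] {A : Matrix κ ι R}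
    (hA : A *ᵥ (fun _ => 1) = 0) (i : ι) : ∑ j, (Aᵀ * A) i j = 0 := by
  simpa [mulVec, dotProduct] using congrFun (show (Aᵀ * A) *ᵥ (fun _ => 1) = 0 by
    rw [← mulVec_mulVec, hA, mulVec_zero]) i

theorem mulVec_dotProduct_self_of_transpose_mul_self_eq_one [Fintype κ] [DecidableEq ι]
    {U : Matrix κ ι R} (hU : Uᵀ * U = 1) (v : ι → R) : (U *ᵥ v) ⬝ᵥ (U *ᵥ v) = v ⬝ᵥ v := by
  rw [dotProduct_mulVec, ← mulVec_transpose, mulVec_mulVec, hU, one_mulVec]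

theorem exists_dotProduct_self_eq_one_and_mulVec_eq_sq [Fintype κ] [DecidableEq κ] [Fintype ν]
    {A : Matrix ν ι R} {U : Matrix ν κ R} {σ : κ → R} {V : Matrix κ ι R}
    (hA : A = U * diagonal σ * V) (hU : Uᵀ * U = 1) (hV : V * Vᵀ = 1) (k : κ) :
    ∃ x, x ⬝ᵥ x = 1 ∧ (A *ᵥ x) ⬝ᵥ (A *ᵥ x) = σ k ^ 2 := by
  refine ⟨Vᵀ *ᵥ Pi.single k 1, ?_, ?_⟩
  · rw [mulVec_dotProduct_self_of_transpose_mul_self_eq_one (by rwa [transpose_transpose])]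
    simp
  · have hAx : A *ᵥ (Vᵀ *ᵥ Pi.single k 1) = U *ᵥ Pi.single k (σ k) := by
      rw [hA, mulVec_mulVec, Matrix.mul_assoc, Matrix.mul_assoc, hV, Matrix.mul_one,
        ← mulVec_mulVec, mulVec_single_one]
      congr 1
      ext i
      by_cases h : i = k <;> simp [h]
    rw [hAx, mulVec_dotProduct_self_of_transpose_mul_self_eq_one hU]
    simp [sq]

end CommSemiring

variable [DecidableEq ι]

theorem dotProduct_diagonal_sum_sub_mulVec_mul_two [CommRing R] {W : Matrix ι ι R}
    (hW : W.IsSymm) (x : ι → R) :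
    x ⬝ᵥ ((diagonal (fun i => ∑ j, W i j) - W) *ᵥ x) * 2 =
      ∑ i, ∑ j, W i j * (x i - x j) ^ 2 := by
  have hswap : ∑ i, ∑ j, W i j * (x j * x j) = ∑ i, ∑ j, W i j * (x i * x i) := by
    rw [sum_comm]
    exact sum_congr rfl fun i _ => sum_congr rfl fun j _ => by rw [← hW.apply i j]
  have hdiag : x ⬝ᵥ (diagonal (fun i => ∑ j, W i j) *ᵥ x) = ∑ i, ∑ j, W i j * (x i * x i) := by
    simp only [dotProduct, mulVec_diagonal, sum_mul, mul_sum]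
    exact sum_congr rfl fun i _ => sum_congr rfl fun j _ => by ring
  have hW : x ⬝ᵥ (W *ᵥ x) = ∑ i, ∑ j, W i j * (x i * x j) := by
    simp only [dotProduct, mulVec, mul_sum]
    exact sum_congr rfl fun i _ => sum_congr rfl fun j _ => by ring
  rw [sub_mulVec, dotProduct_sub, hdiag, hW]
  calc _ = ∑ i, ∑ j, W i j * (x i * x i) + ∑ i, ∑ j, W i j * (x j * x j)
        - 2 * ∑ i, ∑ j, W i j * (x i * x j) := by rw [hswap]; ring
    _ = _ := by
      simp only [← sum_add_distrib, mul_sum, ← sum_sub_distrib]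
      exact sum_congr rfl fun i _ => sum_congr rfl fun j _ => by ring

theorem posSemidef_diagonal_sum_sub {W : Matrix ι ι ℝ} (hW : W.IsSymm)
    (hnn : ∀ i j, 0 ≤ W i j) : (diagonal (fun i => ∑ j, W i j) - W).PosSemidef := by
  refine .of_dotProduct_mulVec_nonneg ((isHermitian_diagonal _).sub hW) fun x => ?_
  have hsq : 0 ≤ ∑ i, ∑ j, W i j * (x i - x j) ^ 2 :=
    sum_nonneg fun i _ => sum_nonneg fun j _ => mul_nonneg (hnn i j) (sq_nonneg _)
  rw [star_trivial]
  linarith [dotProduct_diagonal_sum_sub_mulVec_mul_two hW x]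

theorem mulVec_dotProduct_self_le_of_posSemidef [Fintype κ] {B : Matrix κ ι ℝ} {d : ℝ}
    (h : (d • 1 - Bᵀ * B).PosSemidef) (x : ι → ℝ) :
    (B *ᵥ x) ⬝ᵥ (B *ᵥ x) ≤ d * (x ⬝ᵥ x) := by
  have := h.dotProduct_mulVec_nonneg x
  rw [star_trivial, sub_mulVec, dotProduct_sub, smul_mulVec, one_mulVec, dotProduct_smul,
    ← mulVec_mulVec, dotProduct_mulVec, ← mulVec_transpose, transpose_transpose,
    smul_eq_mul] at this
  linarith

end Matrix

theorem augmented_gram_laplacian_general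
    (p n m : ℕ) (hm : 0 < m)
    (A : Matrix (Fin p) (Fin n) ℝ)
    (hmean : A *ᵥ (fun _ => (1 : ℝ)) = 0)
    (U : Matrix (Fin p) (Fin m) ℝ) (σ : Fin m → ℝ)
    (V : Matrix (Fin m) (Fin n) ℝ)
    (hA : A = U * Matrix.diagonal σ * V)
    (hU : Uᵀ * U = 1) (hV : V * Vᵀ = 1)
    (β : ℝ)
    (hβ1 : ∀ i j, -β ≤ (Aᵀ * A) i j)
    (hβ2 : ∃ i j, (Aᵀ * A) i j = -β)
    (Atil : Matrix (Fin (p + 1)) (Fin n) ℝ)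
    (hAtil : Atil = Matrix.of (fun i j =>
      Fin.cases (Real.sqrt β) (fun i' => A i' j) i))
    (W : Matrix (Fin n) (Fin n) ℝ) (hW : W = Atilᵀ * Atil) :
    (∀ i j, 0 ≤ W i j) ∧
    (∀ i, ∑ j, W i j = β * n) ∧
    ((β * n) • (1 : Matrix (Fin n) (Fin n) ℝ) - Atilᵀ * Atil).PosSemidef ∧
    (σ ⟨0, hm⟩) ^ 2 ≤ β * n := by
  obtain rfl : Atil = consConstRow √β A := hAtil
  have hrow := sum_transpose_mul_self_apply_eq_zero hmean
  have hβ : 0 ≤ β := by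
    obtain ⟨i, -, -⟩ := hβ2
    have := card_nsmul_le_sum univ _ _ fun j _ => hβ1 i j
    rw [hrow i, card_univ, Fintype.card_fin, nsmul_eq_mul] at this
    nlinarith [show (0 : ℝ) < n from Nat.cast_pos.mpr i.pos]
  have hWapply (i j) : W i j = β + (Aᵀ * A) i j := by
    rw [hW, consConstRow_transpose_mul_self_apply, Real.mul_self_sqrt hβ]
  have hWnonneg (i j) : 0 ≤ W i j := by linarith [hWapply i j, hβ1 i j]
  have hWrow (i) : ∑ j, W i j = β * n := by
    simp [hWapply, sum_add_distrib, hrow, mul_comm]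
  have hL : ((β * n) • (1 : Matrix (Fin n) (Fin n) ℝ) - W).PosSemidef := by
    rw [smul_one_eq_diagonal, ← funext hWrow]
    refine posSemidef_diagonal_sum_sub ?_ hWnonneg
    rw [hW, IsSymm, transpose_mul, transpose_transpose]
  subst hW
  refine ⟨hWnonneg, hWrow, hL, ?_⟩
  obtain ⟨x, hx, hAx⟩ := exists_dotProduct_self_eq_one_and_mulVec_eq_sq hA hU hV ⟨0, hm⟩
  calc σ ⟨0, hm⟩ ^ 2 = (A *ᵥ x) ⬝ᵥ (A *ᵥ x) := hAx.symm
    _ ≤ (consConstRow √β A *ᵥ x) ⬝ᵥ (consConstRow √β A *ᵥ x) := by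
      rw [consConstRow_mulVec_dotProduct_self]
      exact le_add_of_nonneg_left (mul_self_nonneg _)
    _ ≤ β * n * (x ⬝ᵥ x) := mulVec_dotProduct_self_le_of_posSemidef hL x
    _ = β * n := by rw [hx, mul_one]

/-- With `A·1 = 0`, `β = −min_{ij}(Aᵀ A)_{ij}`, and
`W = Ãᵀ Ã` for the augmented data `Ã = [√β·1ᵀ; A]`, the matrix `W` is
entrywise nonnegative, its degree matrix is `β n · I`, the Laplacian
`L = β n · I − Ãᵀ Ã` is positive semidefinite, and consequently
`β n ≥ σ₁²` for the largest singular value `σ₁` of `A`. -/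
theorem augmented_gram_laplacian
    (p n m : ℕ) (hn : 0 < n) (hm : 0 < m)
    (A : Matrix (Fin p) (Fin n) ℝ)
    (hmean : A *ᵥ (fun _ => (1 : ℝ)) = 0)
    (U : Matrix (Fin p) (Fin m) ℝ) (σ : Fin m → ℝ)
    (V : Matrix (Fin m) (Fin n) ℝ)
    (hA : A = U * Matrix.diagonal σ * V)
    (hU : Uᵀ * U = 1) (hV : V * Vᵀ = 1)
    (hσpos : ∀ i, 0 < σ i) (hσdesc : ∀ i j : Fin m, i ≤ j → σ j ≤ σ i)
    (β : ℝ)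
    (hβ1 : ∀ i j, -β ≤ (Aᵀ * A) i j)
    (hβ2 : ∃ i j, (Aᵀ * A) i j = -β)
    (Atil : Matrix (Fin (p + 1)) (Fin n) ℝ)
    (hAtil : Atil = Matrix.of (fun i j =>
      Fin.cases (Real.sqrt β) (fun i' => A i' j) i))
    (W : Matrix (Fin n) (Fin n) ℝ) (hW : W = Atilᵀ * Atil) :
    (∀ i j, 0 ≤ W i j) ∧
    (∀ i, ∑ j, W i j = β * n) ∧
    ((β * n) • (1 : Matrix (Fin n) (Fin n) ℝ) - Atilᵀ * Atil).PosSemidef ∧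
    (σ ⟨0, hm⟩) ^ 2 ≤ β * n :=
  augmented_gram_laplacian_general p n m hm A hmean U σ V hA hU hV β hβ1 hβ2 Atil hAtil W hW
end
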